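/- arXiv:1209.5097 — 2 statements merged into one kernel-verified Lean document; each statement's English description precedes it below -/
import Mathlib

section
/- Let k ≥ 1, let ‖·‖ be a norm on the space of k × k complex matrices satisfying ‖AB‖ ≤ ‖A‖·‖B‖ for all A, B, let Δ ≥ 1 be an integer, let ε > 0, and let M ≥ 1 be a real number. Let Q₀, …, Q_{Δ−1}, Q̃₀, …, Q̃_{Δ−1}, and P̃₀, …, P̃_Δ be k × k complex matrices such that: (i) P̃₀ is the identity matrix; (ii) ‖Q_q‖ + ε ≤ M for all 0 ≤ q < Δ; (iii) ‖Q̃_q − Q_q‖ ≤ (1/(2Δ)) · M^{1−Δ} · ε for all 0 ≤ q < Δ; and (iv) ‖P̃_{q+1} − Q̃_q · P̃_q‖ ≤ (1/(2Δ)) · M^{−Δ+q+1} · ε for all 0 ≤ q < Δ. Then for all 0 ≤ q ≤ Δ, ‖P̃_q − Q_{q−1} · Q_{q−2} ⋯ Q₀‖ ≤ (q/Δ) · ε · M^{q−Δ} (where the empty product for q = 0 is the identity). -/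
/-- `prodSeq k Q q = Q (q-1) * Q (q-2) * ⋯ * Q 0` (the empty product for
`q = 0` being the identity). -/
noncomputable def prodSeq (k : ℕ) (Q : ℕ → Matrix (Fin k) (Fin k) ℂ) :
    ℕ → Matrix (Fin k) (Fin k) ℂ
  | 0 => 1
  | q + 1 => Q q * prodSeq k Q q

/-- Error-propagation invariant of truncated binary splitting: along the loop,
`‖P̃_q - Q_{q-1} ⋯ Q_0‖ ≤ (q/Δ) ε M^{q-Δ}` for all `0 ≤ q ≤ Δ`. -/
theorem truncBinSplit_invariant (k : ℕ) (hk : 1 ≤ k)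
    (f : Matrix (Fin k) (Fin k) ℂ → ℝ)
    (hf_zero : ∀ A, f A = 0 ↔ A = 0)
    (hf_add : ∀ A B, f (A + B) ≤ f A + f B)
    (hf_smul : ∀ (c : ℂ) (A), f (c • A) = ‖c‖ * f A)
    (hf_mul : ∀ A B, f (A * B) ≤ f A * f B)
    (Δ : ℕ) (hΔ : 1 ≤ Δ) (ε : ℝ) (hε : 0 < ε) (M : ℝ) (hM : 1 ≤ M)
    (Q Qt Pt : ℕ → Matrix (Fin k) (Fin k) ℂ)
    (hP0 : Pt 0 = 1)
    (hQM : ∀ q < Δ, f (Q q) + ε ≤ M)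
    (hQt : ∀ q < Δ, f (Qt q - Q q) ≤ 1 / (2 * (Δ : ℝ)) * M ^ (1 - (Δ : ℤ)) * ε)
    (hPt : ∀ q < Δ, f (Pt (q + 1) - Qt q * Pt q) ≤
      1 / (2 * (Δ : ℝ)) * M ^ (-(Δ : ℤ) + (q : ℤ) + 1) * ε) :
    ∀ q ≤ Δ, f (Pt q - prodSeq k Q q) ≤ (q : ℝ) / (Δ : ℝ) * ε * M ^ ((q : ℤ) - (Δ : ℤ)) := by
  have f0 : f 0 = 0 := (hf_zero 0).mpr rfl
  have fneg : ∀ A, f (-A) = f A := by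
    intro A
    have := hf_smul (-1) A
    simpa using this
  have fnn : ∀ A, 0 ≤ f A := by
    intro A
    have h := hf_add A (-A)
    rw [add_neg_cancel, f0, fneg] at h
    linarith
  have hΔ0 : (0:ℝ) < Δ := by exact_mod_cast hΔ
  have hM0 : (0:ℝ) < M := lt_of_lt_of_le one_pos hM
  have hQle : ∀ i < Δ, f (Q i) ≤ M := fun i hi => by linarith [hQM i hi]
  -- submultiplicative bound on right-multiplication by prodSeq
  have lemP : ∀ r, (∀ i < r, f (Q i) ≤ M) →
      ∀ A, f (A * prodSeq k Q r) ≤ f A * M ^ r := by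
    intro r
    induction r with
    | zero => intro _ A; simp [prodSeq]
    | succ r ih =>
      intro h A
      have h1 : A * prodSeq k Q (r+1) = (A * Q r) * prodSeq k Q r := by
        show A * (Q r * prodSeq k Q r) = _
        rw [mul_assoc]
      rw [h1]
      calc f ((A * Q r) * prodSeq k Q r) ≤ f (A * Q r) * M ^ r :=
            ih (fun i hi => h i (by omega)) _
        _ ≤ (f A * f (Q r)) * M ^ r :=
            mul_le_mul_of_nonneg_right (hf_mul A (Q r)) (by positivity)
        _ ≤ (f A * M) * M ^ r := by
            have := mul_le_mul_of_nonneg_left (h r (by omega)) (fnn A)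
            exact mul_le_mul_of_nonneg_right this (by positivity)
        _ = f A * M ^ (r+1) := by ring
  intro q
  induction q with
  | zero =>
    intro _
    simp [hP0, prodSeq, f0]
  | succ q ih =>
    intro hq
    have hqΔ : q < Δ := hq
    have IH := ih (Nat.le_of_lt hqΔ)
    set a : ℝ := M ^ ((q:ℤ) - (Δ:ℤ)) with ha
    set t : ℝ := M ^ (1 - (Δ:ℤ)) with ht
    set δ : ℝ := 1 / (2 * (Δ:ℝ)) with hδ
    have ha0 : 0 < a := zpow_pos hM0 _
    have ht0 : 0 < t := zpow_pos hM0 _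
    have hδ0 : 0 < δ := by positivity
    set eq : ℝ := (q:ℝ) / (Δ:ℝ) * ε * a with heq
    have heq0 : 0 ≤ eq := by positivity
    -- exponent identities
    have hMne : M ≠ 0 := ne_of_gt hM0
    have hexp1 : M ^ (-(Δ:ℤ) + (q:ℤ) + 1) = M * a := by
      rw [ha, show -(Δ:ℤ) + (q:ℤ) + 1 = ((q:ℤ) - (Δ:ℤ)) + 1 by ring,
        zpow_add_one₀ hMne, mul_comm]
    have hts : t * M ^ q = M * a := by
      rw [ht, ha, ← zpow_natCast M q, ← zpow_add₀ hMne,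
        show 1 - (Δ:ℤ) + (q:ℤ) = ((q:ℤ) - (Δ:ℤ)) + 1 by ring,
        zpow_add_one₀ hMne, mul_comm]
    have ht1 : t ≤ 1 := by
      rw [ht]
      exact zpow_le_one_of_nonpos₀ hM (by omega)
    -- decomposition
    have hdec : Pt (q+1) - prodSeq k Q (q+1) =
        (Pt (q+1) - Qt q * Pt q) + ((Qt q - Q q) * Pt q)
          + (Q q * (Pt q - prodSeq k Q q)) := by
      show Pt (q+1) - Q q * prodSeq k Q q = _
      noncomm_ring
    have hsplit : f (Pt (q+1) - prodSeq k Q (q+1)) ≤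
        f (Pt (q+1) - Qt q * Pt q) + f ((Qt q - Q q) * Pt q)
          + f (Q q * (Pt q - prodSeq k Q q)) := by
      rw [hdec]
      have h1 := hf_add ((Pt (q+1) - Qt q * Pt q) + ((Qt q - Q q) * Pt q))
        (Q q * (Pt q - prodSeq k Q q))
      have h2 := hf_add (Pt (q+1) - Qt q * Pt q) ((Qt q - Q q) * Pt q)
      linarith
    -- first term
    have hT1 : f (Pt (q+1) - Qt q * Pt q) ≤ δ * (M * a) * ε := by
      have := hPt q hqΔ
      rw [hexp1] at this
      exact this
    -- middle term
    have hTmid : f ((Qt q - Q q) * Pt q) ≤ δ * t * ε * (eq + M ^ q) := by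
      rcases Nat.eq_zero_or_pos q with h0 | hpos
      · subst h0
        rw [hP0, mul_one]
        have := hQt 0 (by omega)
        simp only [heq, Nat.cast_zero, zero_div, zero_mul, zero_add, pow_zero, mul_one]
        linarith
      · obtain ⟨r, rfl⟩ := Nat.exists_eq_add_of_lt hpos
        simp only [zero_add] at *
        have hPq : f (prodSeq k Q (r+1)) ≤ M ^ (r+1) := by
          have h1 : prodSeq k Q (r+1) = Q r * prodSeq k Q r := rfl
          rw [h1]
          calc f (Q r * prodSeq k Q r) ≤ f (Q r) * M ^ r :=
                lemP r (fun i hi => hQle i (by omega)) (Q r)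
            _ ≤ M * M ^ r := mul_le_mul_of_nonneg_right (hQle r (by omega)) (by positivity)
            _ = M ^ (r+1) := by ring
        have hPtq : f (Pt (r+1)) ≤ eq + M ^ (r+1) := by
          have h1 := hf_add (Pt (r+1) - prodSeq k Q (r+1)) (prodSeq k Q (r+1))
          rw [sub_add_cancel] at h1
          linarith
        calc f ((Qt (r+1) - Q (r+1)) * Pt (r+1))
            ≤ f (Qt (r+1) - Q (r+1)) * f (Pt (r+1)) := hf_mul _ _
          _ ≤ (δ * t * ε) * (eq + M ^ (r+1)) := by
              apply mul_le_mul (hQt (r+1) hqΔ) hPtq (fnn _) (by positivity)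
    -- third term
    have hT3 : f (Q q * (Pt q - prodSeq k Q q)) ≤ (M - ε) * eq := by
      calc f (Q q * (Pt q - prodSeq k Q q))
          ≤ f (Q q) * f (Pt q - prodSeq k Q q) := hf_mul _ _
        _ ≤ (M - ε) * eq := by
            apply mul_le_mul ?_ IH (fnn _) (by linarith [hQM q hqΔ, fnn (Q q)])
            linarith [hQM q hqΔ]
    -- final arithmetic
    have hgoalrw : ((q+1:ℕ):ℝ) / (Δ:ℝ) * ε * M ^ (((q+1:ℕ):ℤ) - (Δ:ℤ))
        = ((q:ℝ)+1) / (Δ:ℝ) * ε * (M * a) := by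
      push_cast
      rw [ha, show (q:ℤ) + 1 - (Δ:ℤ) = ((q:ℤ) - (Δ:ℤ)) + 1 by ring,
        zpow_add_one₀ hMne]
      ring
    rw [hgoalrw]
    have hΔR : (1:ℝ) ≤ (Δ:ℝ) := by exact_mod_cast hΔ
    have key1 : δ * t * ε * eq ≤ ε * eq := by
      have hδt : δ * t ≤ 1 := by
        have hδh : δ ≤ 1 := by
          rw [hδ, div_le_one (by positivity)]
          linarith
        calc δ * t ≤ 1 * 1 := mul_le_mul hδh ht1 (le_of_lt ht0) (by norm_num)
          _ = 1 := by norm_num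
      calc δ * t * ε * eq = (δ * t) * (ε * eq) := by ring
        _ ≤ 1 * (ε * eq) :=
            mul_le_mul_of_nonneg_right hδt (mul_nonneg (le_of_lt hε) heq0)
        _ = ε * eq := one_mul _
    have key2 : δ * t * ε * M ^ q = δ * ε * (M * a) := by
      rw [← hts]; ring
    have key3 : 2 * δ = 1 / (Δ:ℝ) := by
      rw [hδ]
      field_simp
    have expand : δ * (M * a) * ε + δ * t * ε * (eq + M ^ q) + (M - ε) * eq
        ≤ ((q:ℝ)+1) / (Δ:ℝ) * ε * (M * a) := by
      have h1 : δ * t * ε * (eq + M ^ q) = δ * t * ε * eq + δ * ε * (M * a) := by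
        rw [← key2]; ring
      rw [h1]
      have h2 : δ * (M * a) * ε + δ * ε * (M * a) = 2 * δ * (ε * (M * a)) := by ring
      have h3 : ε * eq + (M - ε) * eq = M * eq := by ring
      have h4 : 2 * δ * (ε * (M * a)) + M * eq = ((q:ℝ)+1) / (Δ:ℝ) * ε * (M * a) := by
        rw [heq, key3]
        ring
      linarith [key1, h2, h3, h4]
    linarith [hsplit, hT1, hTmid, hT3, expand]
end

section
/- Let k ≥ 1, let ‖·‖ be a norm on the space of k × k complex matrices satisfying ‖AB‖ ≤ ‖A‖·‖B‖ for all A, B, let Δ ≥ 1 be an integer, let ε > 0, and let M ≥ 1 be a real number. Let Q₀, …, Q_{Δ−1}, Q̃₀, …, Q̃_{Δ−1}, and P̃₀, …, P̃_Δ be k × k complex matrices such that: (i) P̃₀ is the identity matrix; (ii) ‖Q_q‖ + ε ≤ M for all 0 ≤ q < Δ; (iii) ‖Q̃_q − Q_q‖ ≤ (1/(2Δ)) · M^{1−Δ} · ε for all 0 ≤ q < Δ; and (iv) ‖P̃_{q+1} − Q̃_q · P̃_q‖ ≤ (1/(2Δ)) · M^{−Δ+q+1} · ε for all 0 ≤ q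 < Δ. Then ‖P̃_Δ − Q_{Δ−1} · Q_{Δ−2} ⋯ Q₀‖ ≤ ε. -/
def RingSeminorm.ofNormSMul {𝕜 R : Type*} [NormedField 𝕜] [Ring R] [Module 𝕜 R] (f : R → ℝ)
    (add_le : ∀ a b, f (a + b) ≤ f a + f b) (norm_smul : ∀ (c : 𝕜) a, f (c • a) = ‖c‖ * f a)
    (mul_le : ∀ a b, f (a * b) ≤ f a * f b) : RingSeminorm R where
  toFun := f
  map_zero' := by simpa using norm_smul 0 0
  add_le' := add_le
  neg' a := by simpa using norm_smul (-1) a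
  mul_le' := mul_le

namespace RingSeminorm

variable {R : Type*} [Ring R] (p : RingSeminorm R)

theorem apply_sub_mul_le (a b x y z : R) :
    p (z - a * x) ≤ p (z - b * y) + p ((b - a) * y) + p (a * (y - x)) := by
  have hsplit : z - a * x = (z - b * y) + (b - a) * y + a * (y - x) := by noncomm_ring
  rw [hsplit]
  exact (map_add_le_add p _ _).trans (add_le_add_left (map_add_le_add p _ _) _)

theorem apply_prod_le_pow {Q P : ℕ → R} {c : ℝ} {n : ℕ} (hP0 : P 0 = 1)
    (hP : ∀ q, P (q + 1) = Q q * P q) (hQ : ∀ q < n, p (Q q) ≤ c) {q : ℕ} (hq : q < n) :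
    p (P (q + 1)) ≤ c ^ (q + 1) := by
  induction q with
  | zero => simpa [hP, hP0] using hQ 0 hq
  | succ q ih =>
    rw [hP, pow_succ']
    have hQq := hQ (q + 1) hq
    exact (map_mul_le_mul p _ _).trans
      (mul_le_mul hQq (ih (by omega)) (apply_nonneg p _) ((apply_nonneg p _).trans hQq))

variable {Q Qt P Pt : ℕ → R} {Δ : ℕ} {ε M δ : ℝ}

theorem apply_approx_le_pow (hM : 1 ≤ M) (hδ0 : 0 ≤ δ) (hδ : Δ * M ^ Δ * δ ≤ ε)
    (hP0 : P 0 = 1) (hP : ∀ q, P (q + 1) = Q q * P q) (hQM : ∀ q < Δ, p (Q q) + ε ≤ M)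
    {q : ℕ} (hq : q + 1 < Δ) (he : p (Pt (q + 1) - P (q + 1)) ≤ (q + 1 : ℕ) * M ^ (q + 1) * δ) :
    p (Pt (q + 1)) ≤ M ^ (q + 1) := by
  have hε : 0 ≤ ε := hδ.trans' (by positivity)
  have hMε : 0 ≤ M - ε := by linarith [hQM 0 (by omega), apply_nonneg p (Q 0)]
  have hprod : p (P (q + 1)) ≤ (M - ε) * M ^ q :=
    calc p (P (q + 1)) ≤ (M - ε) ^ (q + 1) :=
          p.apply_prod_le_pow hP0 hP (fun q hq ↦ by linarith [hQM q hq]) (by omega)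
      _ ≤ (M - ε) * M ^ q := by
          rw [pow_succ']
          exact mul_le_mul_of_nonneg_left (pow_le_pow_left₀ hMε (by linarith) q) hMε
  have herr : p (Pt (q + 1) - P (q + 1)) ≤ ε * M ^ q :=
    calc p (Pt (q + 1) - P (q + 1)) ≤ (q + 1 : ℕ) * M ^ (q + 1) * δ := he
      _ ≤ Δ * M ^ Δ * δ := by
          gcongr
      _ ≤ ε * M ^ q := hδ.trans (le_mul_of_one_le_right hε (one_le_pow₀ hM))
  calc p (Pt (q + 1)) ≤ p (P (q + 1)) + p (Pt (q + 1) - P (q + 1)) := le_map_add_map_sub p _ _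
    _ ≤ (M - ε) * M ^ q + ε * M ^ q := add_le_add hprod herr
    _ = M ^ (q + 1) := by ring

theorem apply_mul_approx_le (hM : 1 ≤ M) (hδ0 : 0 ≤ δ) (hδ : Δ * M ^ Δ * δ ≤ ε)
    (hP0 : P 0 = 1) (hPt0 : Pt 0 = 1) (hP : ∀ q, P (q + 1) = Q q * P q)
    (hQM : ∀ q < Δ, p (Q q) + ε ≤ M) {q : ℕ} (hq : q < Δ)
    (he : p (Pt q - P q) ≤ q * M ^ q * δ) (x : R) :
    p (x * Pt q) ≤ p x * M ^ q := by
  cases q with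
  | zero => simp [hPt0]
  | succ q =>
    exact (map_mul_le_mul p _ _).trans (mul_le_mul_of_nonneg_left
      (p.apply_approx_le_pow hM hδ0 hδ hP0 hP hQM hq he) (apply_nonneg p x))

theorem apply_approx_sub_prod_le (hM : 1 ≤ M) (hδ0 : 0 ≤ δ) (hδ : Δ * M ^ Δ * δ ≤ ε)
    (hP0 : P 0 = 1) (hPt0 : Pt 0 = 1) (hP : ∀ q, P (q + 1) = Q q * P q)
    (hQM : ∀ q < Δ, p (Q q) + ε ≤ M) (hQt : ∀ q < Δ, p (Qt q - Q q) ≤ M * δ / 2)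
    (hPt : ∀ q < Δ, p (Pt (q + 1) - Qt q * Pt q) ≤ M ^ (q + 1) * δ / 2) :
    ∀ q ≤ Δ, p (Pt q - P q) ≤ q * M ^ q * δ := by
  have hε : 0 ≤ ε := hδ.trans' (by positivity)
  intro q hq
  induction q with
  | zero => simp [hP0, hPt0]
  | succ q ih =>
    have hqΔ : q < Δ := hq
    have ihq := ih hqΔ.le
    rw [hP q]
    calc p (Pt (q + 1) - Q q * P q)
        ≤ p (Pt (q + 1) - Qt q * Pt q) + p ((Qt q - Q q) * Pt q) + p (Q q * (Pt q - P q)) :=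
          p.apply_sub_mul_le _ _ _ _ _
      _ ≤ M ^ (q + 1) * δ / 2 + M * δ / 2 * M ^ q + M * (q * M ^ q * δ) := by
          gcongr
          · exact hPt q hqΔ
          · exact (p.apply_mul_approx_le hM hδ0 hδ hP0 hPt0 hP hQM hqΔ ihq _).trans
              (mul_le_mul_of_nonneg_right (hQt q hqΔ) (by positivity))
          · exact (map_mul_le_mul p _ _).trans (mul_le_mul (by linarith [hQM q hqΔ]) ihq
              (apply_nonneg p _) (by linarith))
      _ = (q + 1 : ℕ) * M ^ (q + 1) * δ := by push_cast; ring

end RingSeminorm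

theorem truncBinSplit_correct_general (k : ℕ)
    (f : Matrix (Fin k) (Fin k) ℂ → ℝ)
    (hf_add : ∀ A B, f (A + B) ≤ f A + f B)
    (hf_smul : ∀ (c : ℂ) (A), f (c • A) = ‖c‖ * f A)
    (hf_mul : ∀ A B, f (A * B) ≤ f A * f B)
    (Δ : ℕ) (hΔ : 1 ≤ Δ) (ε : ℝ) (hε : 0 < ε) (M : ℝ) (hM : 1 ≤ M)
    (Q Qt Pt : ℕ → Matrix (Fin k) (Fin k) ℂ)
    (hP0 : Pt 0 = 1)
    (hQM : ∀ q < Δ, f (Q q) + ε ≤ M)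
    (hQt : ∀ q < Δ, f (Qt q - Q q) ≤ 1 / (2 * (Δ : ℝ)) * M ^ (1 - (Δ : ℤ)) * ε)
    (hPt : ∀ q < Δ, f (Pt (q + 1) - Qt q * Pt q) ≤
      1 / (2 * (Δ : ℝ)) * M ^ (-(Δ : ℤ) + (q : ℤ) + 1) * ε) :
    f (Pt Δ - prodSeq k Q Δ) ≤ ε := by
  let p := RingSeminorm.ofNormSMul f hf_add hf_smul hf_mul
  have hM0 : M ≠ 0 := by positivity
  have hΔM : (0 : ℝ) < Δ * M ^ Δ := by positivity
  set δ := ε / (Δ * M ^ Δ) with hδ_def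
  have hδ : Δ * M ^ Δ * δ = ε := by rw [hδ_def]; field_simp
  have hQt' : ∀ q < Δ, p (Qt q - Q q) ≤ M * δ / 2 := by
    intro q hq
    refine (hQt q hq).trans_eq ?_
    rw [zpow_sub₀ hM0, zpow_one, zpow_natCast, hδ_def]
    field_simp
  have hPt' : ∀ q < Δ, p (Pt (q + 1) - Qt q * Pt q) ≤ M ^ (q + 1) * δ / 2 := by
    intro q hq
    refine (hPt q hq).trans_eq ?_
    rw [show -(Δ : ℤ) + q + 1 = ((q + 1 : ℕ) : ℤ) - Δ by push_cast; ring,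
      zpow_sub₀ hM0, zpow_natCast, zpow_natCast, hδ_def]
    field_simp
  have key := p.apply_approx_sub_prod_le (P := prodSeq k Q) hM (by positivity) hδ.le rfl hP0
    (fun _ ↦ rfl) hQM hQt' hPt' Δ le_rfl
  rwa [hδ] at key

/-- Correctness of truncated binary splitting: the final accumulated truncated
product `P̃_Δ` approximates the exact product `Q_{Δ-1} ⋯ Q_0` within `ε`. -/
theorem truncBinSplit_correct (k : ℕ) (hk : 1 ≤ k)
    (f : Matrix (Fin k) (Fin k) ℂ → ℝ)
    (hf_zero : ∀ A, f A = 0 ↔ A = 0)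
    (hf_add : ∀ A B, f (A + B) ≤ f A + f B)
    (hf_smul : ∀ (c : ℂ) (A), f (c • A) = ‖c‖ * f A)
    (hf_mul : ∀ A B, f (A * B) ≤ f A * f B)
    (Δ : ℕ) (hΔ : 1 ≤ Δ) (ε : ℝ) (hε : 0 < ε) (M : ℝ) (hM : 1 ≤ M)
    (Q Qt Pt : ℕ → Matrix (Fin k) (Fin k) ℂ)
    (hP0 : Pt 0 = 1)
    (hQM : ∀ q < Δ, f (Q q) + ε ≤ M)
    (hQt : ∀ q < Δ, f (Qt q - Q q) ≤ 1 / (2 * (Δ : ℝ)) * M ^ (1 - (Δ : ℤ)) * ε)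
    (hPt : ∀ q < Δ, f (Pt (q + 1) - Qt q * Pt q) ≤
      1 / (2 * (Δ : ℝ)) * M ^ (-(Δ : ℤ) + (q : ℤ) + 1) * ε) :
    f (Pt Δ - prodSeq k Q Δ) ≤ ε :=
  truncBinSplit_correct_general k f hf_add hf_smul hf_mul Δ hΔ ε hε M hM Q Qt Pt hP0 hQM hQt hPt
end
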